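/- arXiv:math/0203226 — 3 statements merged into one kernel-verified Lean document; each statement's English description precedes it below -/
import Mathlib

section
/- Let γ_{0,2,2} be the permutation of {1,…,5} whose one-line notation is 4, 3, 5, 2, 1. Then for all n ≥ 3, |S_n(132, 123, γ_{0,2,2})| = F_{n+2} + F_n − 3, where F_m denotes the m-th Fibonacci number. -/
/-!
A permutation avoids 123 and 132 exactly when every entry is followed by at most one larger
entry. Such a permutation of length `N` splits after its maximum: the entries up to the maximum
form a block `N - 2, N - 3, …, N - 1 - s, N - 1` lying above all later entries, and the later
entries form an arbitrary shorter avoider `τ`. An occurrence of 43521 lies either in `τ`, or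
takes `435` from the block (which needs `s ≥ 2`) and `21` from `τ`. An increasing avoider of 123
has length at most 2, so the number `a n` of permutations in question satisfies
`a (n + 2) = a (n + 1) + a n + min n 3`. For `n ≥ 3` this is the recursion of
`F_{n+2} + F_n - 3`, which also matches `a 3 = 4` and `a 4 = 8`.
-/

/-- `π` contains `σ` as a pattern: there is a subsequence of `π` (in one-line notation)
whose entries are in the same relative order as those of `σ`. -/
def PContains {n k : ℕ} (π : Equiv.Perm (Fin n)) (σ : Equiv.Perm (Fin k)) : Prop :=
  ∃ f : Fin k → Fin n, StrictMono f ∧ ∀ s t : Fin k, π (f s) < π (f t) ↔ σ s < σ t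

/-- `π` avoids the pattern `σ`. -/
def PAvoids {n k : ℕ} (π : Equiv.Perm (Fin n)) (σ : Equiv.Perm (Fin k)) : Prop :=
  ¬ PContains π σ

/-- The pattern 123 (the identity permutation of `{1,2,3}`). -/
def p123 : Equiv.Perm (Fin 3) := Equiv.refl (Fin 3)

/-- The pattern 132 (one-line notation `1,3,2`, zero-indexed `0,2,1`). -/
noncomputable def p132 : Equiv.Perm (Fin 3) := Equiv.ofBijective ![0, 2, 1] (by decide)

/-- The pattern `γ_{0,2,2}` with one-line notation `4,3,5,2,1` (zero-indexed `3,2,4,1,0`). -/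
noncomputable def g022 : Equiv.Perm (Fin 5) := Equiv.ofBijective ![3, 2, 4, 1, 0] (by decide)

open Equiv Finset

section Patterns

variable {n : ℕ}

def Avoids123And132 (π : Perm (Fin n)) : Prop :=
  ∀ ⦃i j k : Fin n⦄, i < j → j < k → π i < π j → π k < π i

def Contains43521 (π : Perm (Fin n)) : Prop :=
  ∃ a b c d e : Fin n, a < b ∧ b < c ∧ c < d ∧ d < e ∧
    π e < π d ∧ π d < π b ∧ π b < π a ∧ π a < π c

lemma pContains_of_forall_lt {k : ℕ} {π : Perm (Fin n)} {σ : Perm (Fin k)} {f : Fin k → Fin n}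
    (hf : StrictMono f) (h : ∀ s t, σ s < σ t → π (f s) < π (f t)) : PContains π σ := by
  refine ⟨f, hf, fun s t => ⟨fun hπ => ?_, h s t⟩⟩
  rcases lt_trichotomy (σ s) (σ t) with hlt | heq | hgt
  · exact hlt
  · rw [σ.injective heq] at hπ
    exact absurd hπ (lt_irrefl _)
  · exact absurd (h t s hgt) hπ.not_gt

lemma pContains_p123_iff (π : Perm (Fin n)) :
    PContains π p123 ↔ ∃ i j k, i < j ∧ j < k ∧ π i < π j ∧ π j < π k := by
  constructor
  · rintro ⟨f, hf, hσ⟩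
    exact ⟨f 0, f 1, f 2, hf (by decide), hf (by decide), (hσ 0 1).2 (by decide),
      (hσ 1 2).2 (by decide)⟩
  · rintro ⟨i, j, k, hij, hjk, h₁, h₂⟩
    refine pContains_of_forall_lt (f := ![i, j, k])
      (Fin.strictMono_iff_lt_succ.2 fun a => by fin_cases a <;> simpa) fun s t hst => ?_
    fin_cases s <;> fin_cases t <;> simp_all [p123, h₁.trans h₂]

lemma pContains_p132_iff (π : Perm (Fin n)) :
    PContains π p132 ↔ ∃ i j k, i < j ∧ j < k ∧ π i < π k ∧ π k < π j := by
  constructor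
  · rintro ⟨f, hf, hσ⟩
    exact ⟨f 0, f 1, f 2, hf (by decide), hf (by decide), (hσ 0 2).2 (by decide),
      (hσ 2 1).2 (by decide)⟩
  · rintro ⟨i, j, k, hij, hjk, h₁, h₂⟩
    refine pContains_of_forall_lt (f := ![i, j, k])
      (Fin.strictMono_iff_lt_succ.2 fun a => by fin_cases a <;> simpa) fun s t hst => ?_
    fin_cases s <;> fin_cases t <;> simp_all [p132, h₁.trans h₂]

lemma pContains_g022_iff (π : Perm (Fin n)) : PContains π g022 ↔ Contains43521 π := by
  constructor
  · rintro ⟨f, hf, hσ⟩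
    exact ⟨f 0, f 1, f 2, f 3, f 4, hf (by decide), hf (by decide), hf (by decide),
      hf (by decide), (hσ 4 3).2 (by decide), (hσ 3 1).2 (by decide), (hσ 1 0).2 (by decide),
      (hσ 0 2).2 (by decide)⟩
  · rintro ⟨a, b, c, d, e, hab, hbc, hcd, hde, hed, hdb, hba, hac⟩
    refine pContains_of_forall_lt (f := ![a, b, c, d, e])
      (Fin.strictMono_iff_lt_succ.2 fun i => by fin_cases i <;> simpa) fun s t hst => ?_
    fin_cases s <;> fin_cases t <;> simp_all [g022] <;> order

lemma pAvoids_p132_and_p123_iff (π : Perm (Fin n)) :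
    PAvoids π p132 ∧ PAvoids π p123 ↔ Avoids123And132 π := by
  simp only [PAvoids, pContains_p132_iff, pContains_p123_iff, Avoids123And132]
  constructor
  · rintro ⟨h132, h123⟩ i j k hij hjk hlt
    by_contra hle
    have hik : π i < π k := lt_of_le_of_ne (not_lt.1 hle) (π.injective.ne (hij.trans hjk).ne)
    rcases lt_or_gt_of_ne (π.injective.ne hjk.ne) with hjk' | hkj
    · exact h123 ⟨i, j, k, hij, hjk, hlt, hjk'⟩
    · exact h132 ⟨i, j, k, hij, hjk, hik, hkj⟩
  · intro h
    exact ⟨fun ⟨i, j, k, hij, hjk, h₁, h₂⟩ => (h hij hjk (h₁.trans h₂)).not_gt h₁,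
      fun ⟨i, j, k, hij, hjk, h₁, h₂⟩ => (h hij hjk h₁).not_gt (h₁.trans h₂)⟩

end Patterns

section CardBounds

variable {α : Type*} {n : ℕ} {f : α → Fin n} {T : Finset α} {x : Fin n}

lemma card_le_of_forall_lt (hf : Function.Injective f) (h : ∀ a ∈ T, f a < x) : #T ≤ x := by
  simpa using card_le_card_of_injOn f (t := Iio x) (fun a ha => mem_Iio.2 (h a ha)) hf.injOn

lemma card_add_lt_of_forall_gt (hf : Function.Injective f) (h : ∀ a ∈ T, x < f a) :
    #T + x < n := by
  have := card_le_card_of_injOn f (t := Ioi x) (fun a ha => mem_Ioi.2 (h a ha)) hf.injOn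
  rw [Fin.card_Ioi] at this
  omega

end CardBounds

section MaximumPosition

variable {n : ℕ} {π : Perm (Fin n)} {p i k : Fin n}

lemma Equiv.Perm.apply_lt_of_apply_add_one_eq (hp : (π p : ℕ) + 1 = n) (hi : i ≠ p) :
    π i < π p := by
  have hne : (π i : ℕ) ≠ π p := Fin.val_injective.ne (π.injective.ne hi)
  have := (π i).is_lt
  exact Fin.lt_def.2 (by omega)

namespace Avoids123And132

lemma apply_lt_of_lt_of_lt (hπ : Avoids123And132 π) (hp : (π p : ℕ) + 1 = n)
    (hik : i < k) (hkp : k < p) : π k < π i :=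
  (π.injective.ne hik.ne').lt_or_gt.resolve_right fun h =>
    (hπ hik hkp h).not_gt (π.apply_lt_of_apply_add_one_eq hp (hik.trans hkp).ne)

lemma apply_lt_of_le_of_lt (hπ : Avoids123And132 π) (hp : (π p : ℕ) + 1 = n)
    (hip : i ≤ p) (hpk : p < k) : π k < π i := by
  rcases hip.lt_or_eq with hip | rfl
  · exact hπ hip hpk (π.apply_lt_of_apply_add_one_eq hp hip.ne)
  · exact π.apply_lt_of_apply_add_one_eq hp hpk.ne'

lemma apply_add_lt_of_lt (hπ : Avoids123And132 π) (hp : (π p : ℕ) + 1 = n)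
    (hpk : p < k) : (π k : ℕ) + p + 1 < n := by
  have := card_add_lt_of_forall_gt π.injective (T := Iic p) (x := π k) fun i hi =>
    hπ.apply_lt_of_le_of_lt hp (mem_Iic.1 hi) hpk
  rw [Fin.card_Iic] at this
  omega

lemma apply_add_add_two_eq (hπ : Avoids123And132 π) (hp : (π p : ℕ) + 1 = n)
    (hip : i < p) : (π i : ℕ) + i + 2 = n := by
  have hlow := card_le_of_forall_lt π.injective (T := (Ioi i).erase p) (x := π i) fun k hk => by
    obtain ⟨hkp, hik⟩ := mem_erase.1 hk
    rcases lt_or_gt_of_ne hkp with hkp | hpk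
    · exact hπ.apply_lt_of_lt_of_lt hp (mem_Ioi.1 hik) hkp
    · exact hπ.apply_lt_of_le_of_lt hp hip.le hpk
  have hhigh := card_add_lt_of_forall_gt π.injective (T := insert p (Iio i)) (x := π i)
    fun k hk => by
      rcases mem_insert.1 hk with rfl | hki
      · exact π.apply_lt_of_apply_add_one_eq hp hip.ne
      · exact hπ.apply_lt_of_lt_of_lt hp (mem_Iio.1 hki) hip
  rw [card_erase_of_mem (mem_Ioi.2 hip), Fin.card_Ioi] at hlow
  rw [card_insert_of_notMem (by simpa using hip.le), Fin.card_Iio] at hhigh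
  omega

end Avoids123And132

end MaximumPosition

section PrependBlock

variable {s m : ℕ}

-- `prependBlock s τ` is the skew sum of `s + m - 1, s + m - 2, …, m, s + m` with `τ`.
def blockVal (s m : ℕ) (i : Fin (s + 1)) : ℕ :=
  if (i : ℕ) = s then s + m else s + m - 1 - i

def prependVal (s : ℕ) (τ : Perm (Fin m)) : Fin (s + 1 + m) → ℕ :=
  Fin.append (blockVal s m) fun r => τ r

lemma prependVal_lt (τ : Perm (Fin m)) (i : Fin (s + 1 + m)) : prependVal s τ i < s + 1 + m := by
  induction i using Fin.addCases with
  | left i =>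
    simp only [prependVal, Fin.append_left, blockVal]
    split_ifs <;> omega
  | right r =>
    simp only [prependVal, Fin.append_right]
    omega

lemma prependVal_injective (τ : Perm (Fin m)) : Function.Injective (prependVal s τ) := by
  intro i j h
  induction i using Fin.addCases <;> induction j using Fin.addCases <;>
    simp only [prependVal, Fin.append_left, Fin.append_right, blockVal] at h
  case left.left i j =>
    congr 1
    ext
    split_ifs at h <;> omega
  case right.right r r' =>
    rw [τ.injective (Fin.val_injective h)]
  all_goals split_ifs at h <;> omega

noncomputable def prependBlock (s : ℕ) (τ : Perm (Fin m)) : Perm (Fin (s + 1 + m)) :=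
  Equiv.ofBijective (fun i => ⟨prependVal s τ i, prependVal_lt τ i⟩)
    (Finite.injective_iff_bijective.1 fun _ _ h => prependVal_injective τ (congrArg Fin.val h))

variable {τ : Perm (Fin m)}

lemma prependBlock_natAdd (τ : Perm (Fin m)) (r : Fin m) :
    (prependBlock s τ (Fin.natAdd (s + 1) r) : ℕ) = τ r := by
  simp [prependBlock, prependVal]

lemma prependBlock_apply_cases (τ : Perm (Fin m)) (i : Fin (s + 1 + m)) :
    ((i : ℕ) < s ∧ (prependBlock s τ i : ℕ) + i + 1 = s + m) ∨
    ((i : ℕ) = s ∧ (prependBlock s τ i : ℕ) = s + m) ∨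
    (s < (i : ℕ) ∧ (prependBlock s τ i : ℕ) < m) := by
  induction i using Fin.addCases with
  | left i =>
    simp only [prependBlock, ofBijective_apply, prependVal, Fin.append_left, blockVal,
      Fin.val_castAdd]
    split_ifs <;> omega
  | right r =>
    rw [prependBlock_natAdd]
    simp only [Fin.val_natAdd]
    omega

lemma exists_natAdd_eq {i : Fin (s + 1 + m)} (hi : s < (i : ℕ)) :
    ∃ r : Fin m, Fin.natAdd (s + 1) r = i :=
  ⟨⟨i - (s + 1), by omega⟩, Fin.ext (by simp only [Fin.val_natAdd]; omega)⟩

lemma prependBlock_injective : Function.Injective (prependBlock (m := m) s) := fun τ τ' h =>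
  Equiv.ext fun r => Fin.ext <| by
    simpa only [prependBlock_natAdd] using congrArg (fun π => (π (Fin.natAdd (s + 1) r) : ℕ)) h

lemma avoids123And132_prependBlock_iff :
    Avoids123And132 (prependBlock s τ) ↔ Avoids123And132 τ := by
  constructor
  · intro h i j k hij hjk hlt
    have := Fin.lt_def.1 <| @h (Fin.natAdd (s + 1) i) (Fin.natAdd (s + 1) j)
      (Fin.natAdd (s + 1) k) ((Fin.natAdd_lt_natAdd_iff _).2 hij)
      ((Fin.natAdd_lt_natAdd_iff _).2 hjk)
      (Fin.lt_def.2 (by rw [prependBlock_natAdd, prependBlock_natAdd]; exact hlt))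
    rw [prependBlock_natAdd, prependBlock_natAdd] at this
    exact Fin.lt_def.2 this
  · intro h i j k hij hjk hlt
    rw [Fin.lt_def] at hij hjk hlt ⊢
    by_cases hi : s < (i : ℕ)
    · obtain ⟨i, rfl⟩ := exists_natAdd_eq hi
      simp only [Fin.val_natAdd] at hij
      obtain ⟨j, rfl⟩ := exists_natAdd_eq (i := j) (by omega)
      obtain ⟨k, rfl⟩ := exists_natAdd_eq (i := k) (by omega)
      simp only [prependBlock_natAdd, Fin.val_natAdd] at hij hjk hlt ⊢
      exact h (by omega) (by omega) hlt
    · rcases prependBlock_apply_cases τ i with hi' | hi' | hi' <;>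
      rcases prependBlock_apply_cases τ j with hj' | hj' | hj' <;>
      rcases prependBlock_apply_cases τ k with hk' | hk' | hk' <;> omega

lemma exists_lt_apply_lt_of_not_strictMono (h : ¬ StrictMono τ) :
    ∃ d e : Fin m, d < e ∧ τ e < τ d := by
  simp only [StrictMono, not_forall, not_lt] at h
  obtain ⟨d, e, hde, hle⟩ := h
  exact ⟨d, e, hde, lt_of_le_of_ne hle (τ.injective.ne hde.ne')⟩

lemma contains43521_prependBlock_iff :
    Contains43521 (prependBlock s τ) ↔ Contains43521 τ ∨ (2 ≤ s ∧ ¬ StrictMono τ) := by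
  constructor
  · rintro ⟨a, b, c, d, e, hab, hbc, hcd, hde, hed, hdb, hba, hac⟩
    simp only [Fin.lt_def] at hab hbc hcd hde hed hdb hba hac
    by_cases ha : s < (a : ℕ)
    · left
      obtain ⟨a, rfl⟩ := exists_natAdd_eq ha
      obtain ⟨b, rfl⟩ := exists_natAdd_eq (i := b) (by omega)
      obtain ⟨c, rfl⟩ := exists_natAdd_eq (i := c) (by omega)
      obtain ⟨d, rfl⟩ := exists_natAdd_eq (i := d) (by omega)
      obtain ⟨e, rfl⟩ := exists_natAdd_eq (i := e) (by omega)
      simp only [prependBlock_natAdd, Fin.val_natAdd] at hab hbc hcd hde hed hdb hba hac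
      exact ⟨a, b, c, d, e, by omega, by omega, by omega, by omega, by omega, by omega, by omega,
        by omega⟩
    · right
      have hcs : (c : ℕ) = s ∧ 2 ≤ s := by
        rcases prependBlock_apply_cases τ a with ha' | ha' | ha' <;>
        rcases prependBlock_apply_cases τ b with hb' | hb' | hb' <;>
        rcases prependBlock_apply_cases τ c with hc' | hc' | hc' <;> omega
      obtain ⟨d, rfl⟩ := exists_natAdd_eq (i := d) (by omega)
      obtain ⟨e, rfl⟩ := exists_natAdd_eq (i := e) (by omega)
      simp only [prependBlock_natAdd, Fin.val_natAdd] at hde hed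
      exact ⟨hcs.2, fun hτ => (hτ (Fin.lt_def.2 (by omega))).not_gt (Fin.lt_def.2 hed)⟩
  · rintro (⟨a, b, c, d, e, hab, hbc, hcd, hde, hed, hdb, hba, hac⟩ | ⟨hs, hτ⟩)
    · refine ⟨Fin.natAdd (s + 1) a, Fin.natAdd (s + 1) b, Fin.natAdd (s + 1) c,
        Fin.natAdd (s + 1) d, Fin.natAdd (s + 1) e, ?_⟩
      simp only [Fin.lt_def, prependBlock_natAdd, Fin.val_natAdd] at *
      omega
    · obtain ⟨d, e, hde, hed⟩ := exists_lt_apply_lt_of_not_strictMono hτ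
      refine ⟨⟨0, by omega⟩, ⟨1, by omega⟩, ⟨s, by omega⟩, Fin.natAdd (s + 1) d,
        Fin.natAdd (s + 1) e, ?_⟩
      have h0 := prependBlock_apply_cases (s := s) τ ⟨0, by omega⟩
      have h1 := prependBlock_apply_cases (s := s) τ ⟨1, by omega⟩
      have h2 := prependBlock_apply_cases (s := s) τ ⟨s, by omega⟩
      simp only [Fin.lt_def, prependBlock_natAdd, Fin.val_natAdd] at *
      omega

lemma exists_prependBlock_eq {π : Perm (Fin (s + 1 + m))} (hπ : Avoids123And132 π)
    {p : Fin (s + 1 + m)} (hps : (p : ℕ) = s) (hp : (π p : ℕ) + 1 = s + 1 + m) :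
    ∃ τ, prependBlock s τ = π := by
  have hrest (r : Fin m) : (π (Fin.natAdd (s + 1) r) : ℕ) < m := by
    have := hπ.apply_add_lt_of_lt hp (k := Fin.natAdd (s + 1) r)
      (Fin.lt_def.2 (by simp only [Fin.val_natAdd]; omega))
    omega
  refine ⟨Equiv.ofBijective (fun r => ⟨π (Fin.natAdd (s + 1) r), hrest r⟩)
    (Finite.injective_iff_bijective.1 fun r r' h => ?_), ?_⟩
  · simpa using π.injective (Fin.ext (Fin.mk.inj h))
  ext i
  induction i using Fin.addCases with
  | left i =>
    simp only [prependBlock, ofBijective_apply, prependVal, Fin.append_left, blockVal]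
    split_ifs with hi
    · rw [show Fin.castAdd m i = p from Fin.ext (by simp only [Fin.val_castAdd]; omega)]
      omega
    · have := hπ.apply_add_add_two_eq hp (i := Fin.castAdd m i)
        (Fin.lt_def.2 (by simp only [Fin.val_castAdd]; omega))
      simp only [Fin.val_castAdd] at this
      omega
  | right r => simp [prependBlock, prependVal]

end PrependBlock

section Counting

open Classical

noncomputable def avoiders (n : ℕ) : Finset (Perm (Fin n)) :=
  {π | Avoids123And132 π ∧ ¬ Contains43521 π}

variable {n : ℕ}

lemma mem_avoiders {π : Perm (Fin n)} :
    π ∈ avoiders n ↔ Avoids123And132 π ∧ ¬ Contains43521 π := by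
  simp [avoiders]

-- The position of the maximum is compared in `ℕ`, so that `N` can be replaced by `s + 1 + m`.
lemma card_avoiders_filter_max_at {N s m : ℕ} (h : N = s + 1 + m) :
    #{π ∈ avoiders N | ∃ p : Fin N, (p : ℕ) = s ∧ (π p : ℕ) + 1 = N} =
      #((avoiders m).filter fun τ : Perm (Fin m) => 2 ≤ s → StrictMono τ) := by
  subst h
  symm
  refine card_bij (fun τ _ => prependBlock s τ) (fun τ hτ => ?_)
    (fun τ _ τ' _ h => prependBlock_injective h) (fun π hπ => ?_)
  · simp only [mem_filter, mem_avoiders, avoids123And132_prependBlock_iff,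
      contains43521_prependBlock_iff] at hτ ⊢
    have := prependBlock_apply_cases (s := s) τ ⟨s, by omega⟩
    simp only at this
    exact ⟨⟨hτ.1.1, by tauto⟩, ⟨s, by omega⟩, rfl, by omega⟩
  · simp only [mem_filter, mem_avoiders] at hπ
    obtain ⟨⟨hπ, hπ'⟩, p, hps, hp⟩ := hπ
    obtain ⟨τ, rfl⟩ := exists_prependBlock_eq hπ hps hp
    rw [avoids123And132_prependBlock_iff] at hπ
    rw [contains43521_prependBlock_iff] at hπ'
    exact ⟨τ, by simp only [mem_filter, mem_avoiders]; tauto, rfl⟩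

lemma card_avoiders_succ (N : ℕ) :
    #(avoiders (N + 1)) = ∑ s ∈ range (N + 1),
      #((avoiders (N - s)).filter fun τ : Perm (Fin (N - s)) => 2 ≤ s → StrictMono τ) := by
  rw [card_eq_sum_card_fiberwise (f := fun π => (π.symm (Fin.last N) : ℕ)) (t := range (N + 1))
    fun π _ => mem_range.2 (Fin.is_lt _)]
  refine sum_congr rfl fun s hs => ?_
  rw [← card_avoiders_filter_max_at (N := N + 1) (by simp only [mem_range] at hs; omega)]
  congr 1
  refine filter_congr fun π _ => ⟨?_, ?_⟩
  · rintro rfl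
    exact ⟨_, rfl, by simp⟩
  · rintro ⟨p, rfl, hp⟩
    rw [show Fin.last N = π p from Fin.ext (by simp only [Fin.val_last]; omega), symm_apply_apply]

lemma one_mem_avoiders_iff : (1 : Perm (Fin n)) ∈ avoiders n ↔ n ≤ 2 := by
  simp only [mem_avoiders, Avoids123And132, Contains43521, Perm.one_apply]
  constructor
  · rintro ⟨h, -⟩
    by_contra hn
    exact (@h ⟨0, by omega⟩ ⟨1, by omega⟩ ⟨2, by omega⟩ (by simp) (by simp) (by simp)).not_gt
      (by simp)
  · intro hn
    refine ⟨fun i j k hij hjk _ => absurd (hij.trans hjk) (by omega), ?_⟩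
    rintro ⟨a, b, c, d, e, -, -, -, hde, hed, -⟩
    exact hed.not_gt hde

lemma card_filter_strictMono_avoiders :
    #((avoiders n).filter fun τ : Perm (Fin n) => StrictMono τ) = if n ≤ 2 then 1 else 0 := by
  have : (avoiders n).filter (fun τ : Perm (Fin n) => StrictMono τ) =
      (avoiders n).filter (· = 1) :=
    filter_congr fun τ _ =>
      ⟨fun h => Equiv.ext fun _ => h.apply_eq, by rintro rfl; exact strictMono_id⟩
  rw [this, filter_eq']
  by_cases hn : n ≤ 2 <;> simp [hn, one_mem_avoiders_iff]

lemma card_avoiders_of_le_two (hn : n ≤ 2) : #(avoiders n) = n.factorial := by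
  have : avoiders n = univ := eq_univ_of_forall fun π => mem_avoiders.2
    ⟨fun i j k hij hjk _ => absurd (hij.trans hjk) (by omega),
      fun ⟨a, b, c, d, e, hab, hbc, hcd, hde, _⟩ => by omega⟩
  rw [this, card_univ, Fintype.card_perm, Fintype.card_fin]

lemma sum_range_card_filter_strictMono_avoiders (n : ℕ) :
    ∑ s ∈ range n, #((avoiders (n - 1 - s)).filter fun τ : Perm (Fin (n - 1 - s)) => StrictMono τ)
      = min n 3 := by
  simp only [card_filter_strictMono_avoiders]
  rw [sum_range_reflect (fun s => if s ≤ 2 then 1 else 0) n, sum_boole, Nat.cast_id,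
    show (range n).filter (· ≤ 2) = range (min n 3) by
      ext; simp only [mem_filter, mem_range]; omega,
    card_range]

lemma card_avoiders_add_two (n : ℕ) :
    #(avoiders (n + 2)) = #(avoiders (n + 1)) + #(avoiders n) + min n 3 := by
  rw [card_avoiders_succ, sum_range_succ', sum_range_succ',
    ← sum_range_card_filter_strictMono_avoiders]
  simp only [le_add_iff_nonneg_left, zero_le, forall_const]
  rw [sum_congr rfl fun s _ => by rw [show n + 1 - (s + 1 + 1) = n - 1 - s by omega],
    show n + 1 - (0 + 1) = n by omega, Nat.sub_zero,
    filter_true_of_mem fun _ _ h => absurd h (by omega),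
    filter_true_of_mem fun _ _ h => absurd h (by omega)]
  ring

lemma card_avoiders_add_three (k : ℕ) :
    #(avoiders (k + 3)) + 3 = Nat.fib (k + 5) + Nat.fib (k + 3) ∧
      #(avoiders (k + 4)) + 3 = Nat.fib (k + 6) + Nat.fib (k + 4) := by
  induction k with
  | zero =>
    have h₁ : #(avoiders 1) = 1 := card_avoiders_of_le_two (by norm_num)
    have h₂ : #(avoiders 2) = 2 := card_avoiders_of_le_two (by norm_num)
    have h₃ : #(avoiders 3) = #(avoiders 2) + #(avoiders 1) + 1 := card_avoiders_add_two 1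
    have h₄ : #(avoiders 4) = #(avoiders 3) + #(avoiders 2) + 2 := card_avoiders_add_two 2
    have hfib : Nat.fib 3 = 2 ∧ Nat.fib 4 = 3 ∧ Nat.fib 5 = 5 ∧ Nat.fib 6 = 8 := by decide
    show #(avoiders 3) + 3 = Nat.fib 5 + Nat.fib 3 ∧ #(avoiders 4) + 3 = Nat.fib 6 + Nat.fib 4
    omega
  | succ k ih =>
    have h : #(avoiders (k + 5)) = #(avoiders (k + 4)) + #(avoiders (k + 3)) + min (k + 3) 3 :=
      card_avoiders_add_two (k + 3)
    rw [min_eq_right (by omega)] at h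
    have h₅ : Nat.fib (k + 5) = Nat.fib (k + 3) + Nat.fib (k + 4) := Nat.fib_add_two
    have h₆ : Nat.fib (k + 6) = Nat.fib (k + 4) + Nat.fib (k + 5) := Nat.fib_add_two
    have h₇ : Nat.fib (k + 7) = Nat.fib (k + 5) + Nat.fib (k + 6) := Nat.fib_add_two
    show _ ∧ #(avoiders (k + 5)) + 3 = Nat.fib (k + 7) + Nat.fib (k + 5)
    exact ⟨ih.2, by omega⟩

lemma card_avoiders (hn : 3 ≤ n) : #(avoiders n) + 3 = Nat.fib (n + 2) + Nat.fib n := by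
  obtain ⟨k, rfl⟩ := Nat.exists_eq_add_of_le' hn
  exact (card_avoiders_add_three k).1

end Counting

/-- For `n ≥ 3`, `|S_n(132, 123, γ_{0,2,2})| = F_{n+2} + F_n - 3`. -/
theorem statement7 (n : ℕ) (hn : 3 ≤ n) :
    (Nat.card {π : Equiv.Perm (Fin n) //
        PAvoids π p132 ∧ PAvoids π p123 ∧ PAvoids π g022} : ℤ) =
      Nat.fib (n + 2) + Nat.fib n - 3 := by
  classical
  have hcard : Nat.card {π : Perm (Fin n) // PAvoids π p132 ∧ PAvoids π p123 ∧ PAvoids π g022} =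
      #(avoiders n) := by
    rw [Nat.card_eq_fintype_card, Fintype.card_subtype]
    congr 1
    ext π
    rw [mem_filter, mem_avoiders, ← pAvoids_p132_and_p123_iff, ← pContains_g022_iff]
    simp only [mem_univ, true_and, PAvoids, and_assoc]
  have := card_avoiders hn
  rw [hcard]
  omega
end

section
/- For all n ≥ 1, the number of permutations of {1,…,n} avoiding all three patterns 132, 213, and 2341 equals F_{n+2} − 1, where F_m denotes the m-th Fibonacci number. -/
/-- The pattern 213 (one-line notation `2,1,3`, zero-indexed `1,0,2`). -/
noncomputable def p213 : Equiv.Perm (Fin 3) := Equiv.ofBijective ![1, 0, 2] (by decide)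

/-- The pattern 2341 (zero-indexed `1,2,3,0`). -/
noncomputable def p2341 : Equiv.Perm (Fin 4) := Equiv.ofBijective ![1, 2, 3, 0] (by decide)

lemma pc132 {n : ℕ} (π : Equiv.Perm (Fin n)) :
    PContains π p132 ↔ ∃ i j k : Fin n, i < j ∧ j < k ∧ π i < π k ∧ π k < π j := by
  constructor
  · rintro ⟨f, hf, h⟩
    exact ⟨f 0, f 1, f 2, hf (by decide), hf (by decide),
      (h 0 2).2 (by decide), (h 2 1).2 (by decide)⟩
  · rintro ⟨i, j, k, hij, hjk, h1, h2⟩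
    have h3 : π i < π j := h1.trans h2
    have hik : i < k := hij.trans hjk
    refine ⟨fun s => if s.val = 0 then i else if s.val = 1 then j else k, ?_, ?_⟩
    · intro s t hst
      fin_cases s <;> fin_cases t <;> norm_num <;>
        first
          | exact absurd hst (by decide)
          | exact hij | exact hjk | exact hik
    · intro s t
      fin_cases s <;> fin_cases t <;> norm_num <;>
        first
          | exact iff_of_true h1 (by decide)
          | exact iff_of_true h2 (by decide)
          | exact iff_of_true h3 (by decide)
          | exact iff_of_false (asymm h1) (by decide)
          | exact iff_of_false (asymm h2) (by decide)
          | exact iff_of_false (asymm h3) (by decide)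

lemma pc213 {n : ℕ} (π : Equiv.Perm (Fin n)) :
    PContains π p213 ↔ ∃ i j k : Fin n, i < j ∧ j < k ∧ π j < π i ∧ π i < π k := by
  constructor
  · rintro ⟨f, hf, h⟩
    exact ⟨f 0, f 1, f 2, hf (by decide), hf (by decide),
      (h 1 0).2 (by decide), (h 0 2).2 (by decide)⟩
  · rintro ⟨i, j, k, hij, hjk, h1, h2⟩
    have h3 : π j < π k := h1.trans h2
    have hik : i < k := hij.trans hjk
    refine ⟨fun s => if s.val = 0 then i else if s.val = 1 then j else k, ?_, ?_⟩
    · intro s t hst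
      fin_cases s <;> fin_cases t <;> norm_num <;>
        first
          | exact absurd hst (by decide)
          | exact hij | exact hjk | exact hik
    · intro s t
      fin_cases s <;> fin_cases t <;> norm_num <;>
        first
          | exact iff_of_true h1 (by decide)
          | exact iff_of_true h2 (by decide)
          | exact iff_of_true h3 (by decide)
          | exact iff_of_false (asymm h1) (by decide)
          | exact iff_of_false (asymm h2) (by decide)
          | exact iff_of_false (asymm h3) (by decide)

lemma pc2341 {n : ℕ} (π : Equiv.Perm (Fin n)) :
    PContains π p2341 ↔ ∃ i j k l : Fin n,
      i < j ∧ j < k ∧ k < l ∧ π i < π j ∧ π j < π k ∧ π l < π i := by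
  constructor
  · rintro ⟨f, hf, h⟩
    exact ⟨f 0, f 1, f 2, f 3, hf (by decide), hf (by decide), hf (by decide),
      (h 0 1).2 (by decide), (h 1 2).2 (by decide), (h 3 0).2 (by decide)⟩
  · rintro ⟨i, j, k, l, hij, hjk, hkl, h1, h2, h3⟩
    have h4 : π i < π k := h1.trans h2
    have h5 : π l < π j := h3.trans h1
    have h6 : π l < π k := h3.trans h4
    have hik : i < k := hij.trans hjk
    have hjl : j < l := hjk.trans hkl
    have hil : i < l := hij.trans hjl
    refine ⟨fun s => if s.val = 0 then i else if s.val = 1 then j else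
      if s.val = 2 then k else l, ?_, ?_⟩
    · intro s t hst
      fin_cases s <;> fin_cases t <;> norm_num <;>
        first
          | exact absurd hst (by decide)
          | exact hij | exact hjk | exact hkl | exact hik | exact hjl | exact hil
    · intro s t
      fin_cases s <;> fin_cases t <;> norm_num <;>
        first
          | exact iff_of_true h1 (by decide)
          | exact iff_of_true h2 (by decide)
          | exact iff_of_true h3 (by decide)
          | exact iff_of_true h4 (by decide)
          | exact iff_of_true h5 (by decide)
          | exact iff_of_true h6 (by decide)
          | exact iff_of_false (asymm h1) (by decide)
          | exact iff_of_false (asymm h2) (by decide)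
          | exact iff_of_false (asymm h3) (by decide)
          | exact iff_of_false (asymm h4) (by decide)
          | exact iff_of_false (asymm h5) (by decide)
          | exact iff_of_false (asymm h6) (by decide)

def Good {n : ℕ} (π : Equiv.Perm (Fin n)) : Prop :=
  (∀ i j k : Fin n, i < j → j < k → π i < π k → π k < π j → False) ∧
  (∀ i j k : Fin n, i < j → j < k → π j < π i → π i < π k → False) ∧
  (∀ i j k l : Fin n, i < j → j < k → k < l → π i < π j → π j < π k → π l < π i → False)

lemma avoids_iff_good {n : ℕ} (π : Equiv.Perm (Fin n)) :
    (PAvoids π p132 ∧ PAvoids π p213 ∧ PAvoids π p2341) ↔ Good π := by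
  unfold PAvoids Good
  rw [pc132, pc213, pc2341]
  constructor
  · rintro ⟨a1, a2, a3⟩
    exact ⟨fun i j k hij hjk u v => a1 ⟨i, j, k, hij, hjk, u, v⟩,
      fun i j k hij hjk u v => a2 ⟨i, j, k, hij, hjk, u, v⟩,
      fun i j k l hij hjk hkl u v w => a3 ⟨i, j, k, l, hij, hjk, hkl, u, v, w⟩⟩
  · rintro ⟨a1, a2, a3⟩
    refine ⟨?_, ?_, ?_⟩
    · rintro ⟨i, j, k, hij, hjk, u, v⟩; exact a1 i j k hij hjk u v
    · rintro ⟨i, j, k, hij, hjk, u, v⟩; exact a2 i j k hij hjk u v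
    · rintro ⟨i, j, k, l, hij, hjk, hkl, u, v, w⟩; exact a3 i j k l hij hjk hkl u v w

def extFun (b : ℕ) {n : ℕ} (ρ : Equiv.Perm (Fin n)) : Fin (n + b) → Fin (n + b) :=
  fun i => if h : (i : ℕ) < b then ⟨n + i, by omega⟩
    else ⟨ρ ⟨i - b, by omega⟩, by have := (ρ ⟨i - b, by omega⟩).isLt; omega⟩

lemma extFun_lt (b : ℕ) {n : ℕ} (ρ : Equiv.Perm (Fin n)) (i : Fin (n + b))
    (h : (i : ℕ) < b) : (extFun b ρ i : ℕ) = n + i := by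
  unfold extFun; rw [dif_pos h]

lemma extFun_ge (b : ℕ) {n : ℕ} (ρ : Equiv.Perm (Fin n)) (i : Fin (n + b))
    (h : b ≤ (i : ℕ)) : (extFun b ρ i : ℕ) = ρ ⟨(i : ℕ) - b, by omega⟩ := by
  unfold extFun; rw [dif_neg (by omega)]

lemma extFun_inj (b : ℕ) {n : ℕ} (ρ : Equiv.Perm (Fin n)) :
    Function.Injective (extFun b ρ) := by
  intro x y hxy
  have hxy' : (extFun b ρ x : ℕ) = extFun b ρ y := by rw [hxy]
  by_cases hx : (x : ℕ) < b <;> by_cases hy : (y : ℕ) < b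
  · rw [extFun_lt b ρ x hx, extFun_lt b ρ y (by omega)] at hxy'
    exact Fin.ext (by omega)
  · rw [extFun_lt b ρ x hx, extFun_ge b ρ y (by omega)] at hxy'
    have := (ρ ⟨(y : ℕ) - b, by omega⟩).isLt; omega
  · rw [extFun_ge b ρ x (by omega), extFun_lt b ρ y (by omega)] at hxy'
    have := (ρ ⟨(x : ℕ) - b, by omega⟩).isLt; omega
  · rw [extFun_ge b ρ x (by omega), extFun_ge b ρ y (by omega)] at hxy'
    have := ρ.injective (Fin.ext hxy' : ρ ⟨(x : ℕ) - b, by omega⟩ = ρ ⟨(y : ℕ) - b, by omega⟩)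
    have := Fin.mk.injEq ((x : ℕ) - b) _ ((y : ℕ) - b) _ ▸ this
    exact Fin.ext (by omega)

noncomputable def extPerm (b : ℕ) {n : ℕ} (ρ : Equiv.Perm (Fin n)) : Equiv.Perm (Fin (n + b)) :=
  Equiv.ofBijective (extFun b ρ) ((Finite.injective_iff_bijective).mp (extFun_inj b ρ))

lemma extPerm_lt (b : ℕ) {n : ℕ} (ρ : Equiv.Perm (Fin n)) (i : Fin (n + b))
    (h : (i : ℕ) < b) : ((extPerm b ρ) i : ℕ) = n + i := extFun_lt b ρ i h

lemma extPerm_ge (b : ℕ) {n : ℕ} (ρ : Equiv.Perm (Fin n)) (i : Fin (n + b))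
    (h : b ≤ (i : ℕ)) : ((extPerm b ρ) i : ℕ) = ρ ⟨(i : ℕ) - b, by omega⟩ := extFun_ge b ρ i h

lemma extPerm_pos (b : ℕ) {n : ℕ} (ρ : Equiv.Perm (Fin n)) (x : Fin n) :
    ((extPerm b ρ) ⟨b + (x : ℕ), by omega⟩ : ℕ) = ρ x := by
  rw [extPerm_ge b ρ _ (by simp)]
  congr 1
  exact Fin.ext (by simp)

lemma good_extPerm {b n : ℕ} (hb : b ≤ 2) (ρ : Equiv.Perm (Fin n)) :
    Good (extPerm b ρ) ↔ Good ρ := by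
  constructor
  · rintro ⟨g1, g2, g3⟩
    refine ⟨?_, ?_, ?_⟩
    · intro i j k hij hjk u v
      refine g1 ⟨b + i, by omega⟩ ⟨b + j, by omega⟩ ⟨b + k, by omega⟩ ?_ ?_ ?_ ?_
      · exact Fin.mk_lt_mk.2 (by have := Fin.lt_def.1 hij; omega)
      · exact Fin.mk_lt_mk.2 (by have := Fin.lt_def.1 hjk; omega)
      · rw [Fin.lt_def, extPerm_pos, extPerm_pos]; exact Fin.lt_def.1 u
      · rw [Fin.lt_def, extPerm_pos, extPerm_pos]; exact Fin.lt_def.1 v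
    · intro i j k hij hjk u v
      refine g2 ⟨b + i, by omega⟩ ⟨b + j, by omega⟩ ⟨b + k, by omega⟩ ?_ ?_ ?_ ?_
      · exact Fin.mk_lt_mk.2 (by have := Fin.lt_def.1 hij; omega)
      · exact Fin.mk_lt_mk.2 (by have := Fin.lt_def.1 hjk; omega)
      · rw [Fin.lt_def, extPerm_pos, extPerm_pos]; exact Fin.lt_def.1 u
      · rw [Fin.lt_def, extPerm_pos, extPerm_pos]; exact Fin.lt_def.1 v
    · intro i j k l hij hjk hkl u v w
      refine g3 ⟨b + i, by omega⟩ ⟨b + j, by omega⟩ ⟨b + k, by omega⟩ ⟨b + l, by omega⟩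
        ?_ ?_ ?_ ?_ ?_ ?_
      · exact Fin.mk_lt_mk.2 (by have := Fin.lt_def.1 hij; omega)
      · exact Fin.mk_lt_mk.2 (by have := Fin.lt_def.1 hjk; omega)
      · exact Fin.mk_lt_mk.2 (by have := Fin.lt_def.1 hkl; omega)
      · rw [Fin.lt_def, extPerm_pos, extPerm_pos]; exact Fin.lt_def.1 u
      · rw [Fin.lt_def, extPerm_pos, extPerm_pos]; exact Fin.lt_def.1 v
      · rw [Fin.lt_def, extPerm_pos, extPerm_pos]; exact Fin.lt_def.1 w
  · rintro ⟨g1, g2, g3⟩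
    set π := extPerm b ρ with hπ
    have hlo : ∀ i : Fin (n + b), b ≤ (i : ℕ) → (π i : ℕ) < n := by
      intro i hi
      rw [extPerm_ge b ρ i hi]
      exact (ρ _).isLt
    have hhi : ∀ i : Fin (n + b), (i : ℕ) < b → (π i : ℕ) = n + i :=
      fun i hi => extPerm_lt b ρ i hi
    refine ⟨?_, ?_, ?_⟩
    · intro i j k hij hjk u v
      rw [Fin.lt_def] at hij hjk u v
      by_cases hi : (i : ℕ) < b
      · -- π i ≥ n, so π k > n means k in block, π j > π k means j in block
        have hpi := hhi i hi
        have hk : (k : ℕ) < b := by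
          by_contra hk
          have := hlo k (by omega); omega
        have hj : (j : ℕ) < b := by omega
        have := hhi j hj; have := hhi k hk
        omega
      · obtain ⟨i', hi'⟩ : ∃ i' : Fin n, (i' : ℕ) = (i : ℕ) - b := ⟨⟨(i : ℕ) - b, by omega⟩, rfl⟩
        obtain ⟨j', hj'⟩ : ∃ j' : Fin n, (j' : ℕ) = (j : ℕ) - b := ⟨⟨(j : ℕ) - b, by omega⟩, rfl⟩
        obtain ⟨k', hk'⟩ : ∃ k' : Fin n, (k' : ℕ) = (k : ℕ) - b := ⟨⟨(k : ℕ) - b, by omega⟩, rfl⟩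
        have hargi : (⟨(i : ℕ) - b, by omega⟩ : Fin n) = i' :=
          Fin.ext (show (i : ℕ) - b = (i' : ℕ) by omega)
        have ei : (π i : ℕ) = ρ i' := by
          rw [extPerm_ge b ρ i (by omega), hargi]
        have hargj : (⟨(j : ℕ) - b, by omega⟩ : Fin n) = j' :=
          Fin.ext (show (j : ℕ) - b = (j' : ℕ) by omega)
        have ej : (π j : ℕ) = ρ j' := by
          rw [extPerm_ge b ρ j (by omega), hargj]
        have hargk : (⟨(k : ℕ) - b, by omega⟩ : Fin n) = k' :=
          Fin.ext (show (k : ℕ) - b = (k' : ℕ) by omega)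
        have ek : (π k : ℕ) = ρ k' := by
          rw [extPerm_ge b ρ k (by omega), hargk]
        exact g1 i' j' k' (Fin.lt_def.2 (by omega)) (Fin.lt_def.2 (by omega))
          (Fin.lt_def.2 (by omega)) (Fin.lt_def.2 (by omega))
    · intro i j k hij hjk u v
      rw [Fin.lt_def] at hij hjk u v
      by_cases hi : (i : ℕ) < b
      · have hpi := hhi i hi
        have hk : (k : ℕ) < b := by
          by_contra hk
          have := hlo k (by omega); omega
        have hj : (j : ℕ) < b := by omega
        have := hhi j hj
        omega
      · obtain ⟨i', hi'⟩ : ∃ i' : Fin n, (i' : ℕ) = (i : ℕ) - b := ⟨⟨(i : ℕ) - b, by omega⟩, rfl⟩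
        obtain ⟨j', hj'⟩ : ∃ j' : Fin n, (j' : ℕ) = (j : ℕ) - b := ⟨⟨(j : ℕ) - b, by omega⟩, rfl⟩
        obtain ⟨k', hk'⟩ : ∃ k' : Fin n, (k' : ℕ) = (k : ℕ) - b := ⟨⟨(k : ℕ) - b, by omega⟩, rfl⟩
        have hargi : (⟨(i : ℕ) - b, by omega⟩ : Fin n) = i' :=
          Fin.ext (show (i : ℕ) - b = (i' : ℕ) by omega)
        have ei : (π i : ℕ) = ρ i' := by
          rw [extPerm_ge b ρ i (by omega), hargi]
        have hargj : (⟨(j : ℕ) - b, by omega⟩ : Fin n) = j' :=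
          Fin.ext (show (j : ℕ) - b = (j' : ℕ) by omega)
        have ej : (π j : ℕ) = ρ j' := by
          rw [extPerm_ge b ρ j (by omega), hargj]
        have hargk : (⟨(k : ℕ) - b, by omega⟩ : Fin n) = k' :=
          Fin.ext (show (k : ℕ) - b = (k' : ℕ) by omega)
        have ek : (π k : ℕ) = ρ k' := by
          rw [extPerm_ge b ρ k (by omega), hargk]
        exact g2 i' j' k' (Fin.lt_def.2 (by omega)) (Fin.lt_def.2 (by omega))
          (Fin.lt_def.2 (by omega)) (Fin.lt_def.2 (by omega))
    · intro i j k l hij hjk hkl u v w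
      rw [Fin.lt_def] at hij hjk hkl u v w
      by_cases hi : (i : ℕ) < b
      · have hpi := hhi i hi
        have hj : (j : ℕ) < b := by
          by_contra hj
          have := hlo j (by omega); omega
        have hpj := hhi j hj
        have hk : (k : ℕ) < b := by
          by_contra hk
          have := hlo k (by omega); omega
        omega
      · obtain ⟨i', hi'⟩ : ∃ i' : Fin n, (i' : ℕ) = (i : ℕ) - b := ⟨⟨(i : ℕ) - b, by omega⟩, rfl⟩
        obtain ⟨j', hj'⟩ : ∃ j' : Fin n, (j' : ℕ) = (j : ℕ) - b := ⟨⟨(j : ℕ) - b, by omega⟩, rfl⟩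
        obtain ⟨k', hk'⟩ : ∃ k' : Fin n, (k' : ℕ) = (k : ℕ) - b := ⟨⟨(k : ℕ) - b, by omega⟩, rfl⟩
        obtain ⟨l', hl'⟩ : ∃ l' : Fin n, (l' : ℕ) = (l : ℕ) - b := ⟨⟨(l : ℕ) - b, by omega⟩, rfl⟩
        have hargi : (⟨(i : ℕ) - b, by omega⟩ : Fin n) = i' :=
          Fin.ext (show (i : ℕ) - b = (i' : ℕ) by omega)
        have ei : (π i : ℕ) = ρ i' := by
          rw [extPerm_ge b ρ i (by omega), hargi]
        have hargj : (⟨(j : ℕ) - b, by omega⟩ : Fin n) = j' :=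
          Fin.ext (show (j : ℕ) - b = (j' : ℕ) by omega)
        have ej : (π j : ℕ) = ρ j' := by
          rw [extPerm_ge b ρ j (by omega), hargj]
        have hargk : (⟨(k : ℕ) - b, by omega⟩ : Fin n) = k' :=
          Fin.ext (show (k : ℕ) - b = (k' : ℕ) by omega)
        have ek : (π k : ℕ) = ρ k' := by
          rw [extPerm_ge b ρ k (by omega), hargk]
        have hargl : (⟨(l : ℕ) - b, by omega⟩ : Fin n) = l' :=
          Fin.ext (show (l : ℕ) - b = (l' : ℕ) by omega)
        have el : (π l : ℕ) = ρ l' := by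
          rw [extPerm_ge b ρ l (by omega), hargl]
        exact g3 i' j' k' l' (Fin.lt_def.2 (by omega)) (Fin.lt_def.2 (by omega))
          (Fin.lt_def.2 (by omega)) (Fin.lt_def.2 (by omega)) (Fin.lt_def.2 (by omega))
          (Fin.lt_def.2 (by omega))

lemma good_one (n : ℕ) : Good (1 : Equiv.Perm (Fin n)) := by
  refine ⟨?_, ?_, ?_⟩
  · intro i j k hij hjk u v
    simp only [Equiv.Perm.one_apply] at u v
    exact absurd (hjk.trans v) (lt_irrefl j)
  · intro i j k hij hjk u v
    simp only [Equiv.Perm.one_apply] at u v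
    exact absurd (hij.trans u) (lt_irrefl i)
  · intro i j k l hij hjk hkl u v w
    simp only [Equiv.Perm.one_apply] at u v w
    exact absurd (((hij.trans hjk).trans hkl).trans w) (lt_irrefl i)

lemma strictMono_le_self {m : ℕ} (π : Equiv.Perm (Fin m)) (h : StrictMono (π : Fin m → Fin m)) :
    ∀ i : Fin m, (i : ℕ) ≤ π i := by
  have key : ∀ v : ℕ, ∀ hv : v < m, v ≤ (π ⟨v, hv⟩ : ℕ) := by
    intro v
    induction v with
    | zero => intro hv; exact Nat.zero_le _
    | succ w ih =>
      intro hv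
      have h1 : (π ⟨w, by omega⟩ : Fin m) < π ⟨w + 1, hv⟩ := h (Fin.mk_lt_mk.2 (by omega))
      have := ih (by omega)
      have := Fin.lt_def.1 h1
      omega
  intro i
  have := key i i.isLt
  simpa using this

lemma strictMono_eq_one {m : ℕ} (π : Equiv.Perm (Fin m)) (h : StrictMono (π : Fin m → Fin m)) :
    π = 1 := by
  have hsymm : StrictMono (π.symm : Fin m → Fin m) := by
    intro a b hab
    by_contra hc
    have : (π.symm b : Fin m) ≤ π.symm a := not_lt.1 hc
    have := h.le_iff_le.2 this
    simp only [Equiv.apply_symm_apply] at this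
    exact absurd hab (not_lt.2 this)
  apply Equiv.ext
  intro i
  have h1 := strictMono_le_self π h i
  have h2 := strictMono_le_self π.symm hsymm (π i)
  simp only [Equiv.symm_apply_apply] at h2
  exact Fin.ext (by simp only [Equiv.Perm.one_apply]; omega)

lemma good_structure (n : ℕ) (π : Equiv.Perm (Fin (n + 3))) (hg : Good π) :
    (∃ ρ : Equiv.Perm (Fin (n + 2)), Good ρ ∧ π = extPerm 1 ρ) ∨
    (∃ ρ : Equiv.Perm (Fin (n + 1)), Good ρ ∧ π = extPerm 2 ρ) ∨ π = 1 := by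
  obtain ⟨g1, g2, g3⟩ := hg
  obtain ⟨m, hmL⟩ : ∃ m : Fin (n + 3), (π m : ℕ) = n + 2 :=
    ⟨π.symm ⟨n + 2, by omega⟩, by rw [π.apply_symm_apply]⟩
  have hne : ∀ x : Fin (n + 3), x ≠ m → (π x : ℕ) < n + 2 := by
    intro x hx
    have h1 : π x ≠ π m := fun h => hx (π.injective h)
    have h2 : (π x : ℕ) ≠ n + 2 := fun h => h1 (Fin.ext (by omega))
    have := (π x).isLt
    omega
  have hlast : ∀ x : Fin (n + 3), x ≠ m → π x < π m := by
    intro x hx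
    exact Fin.lt_def.2 (by have := hne x hx; omega)
  have incr : ∀ i j : Fin (n + 3), i < j → j ≤ m → π i < π j := by
    intro i j hij hjm
    rcases hjm.lt_or_eq with hjm' | rfl
    · have h1 : π i < π m := hlast i (Fin.ne_of_lt (hij.trans hjm'))
      by_contra hc
      have hne' : π j ≠ π i := fun h => (Fin.ne_of_lt hij) (π.injective h).symm
      have h2 : π j < π i := lt_of_le_of_ne (not_lt.1 hc) hne'
      exact g2 i j m hij hjm' h2 h1
    · exact hlast i (Fin.ne_of_lt hij)
  have dec : ∀ i j : Fin (n + 3), i ≤ m → m < j → π j < π i := by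
    intro i j him hmj
    rcases him.lt_or_eq with him' | rfl
    · have h1 : π j < π m := hlast j (ne_of_gt hmj)
      by_contra hc
      have hne' : π i ≠ π j := fun h => (Fin.ne_of_lt (him'.trans hmj)) (π.injective h)
      have h2 : π i < π j := lt_of_le_of_ne (not_lt.1 hc) hne'
      exact g1 i m j him' hmj h2 h1
    · exact hlast j (ne_of_gt hmj)
  by_cases hm0 : (m : ℕ) = 0
  · -- first block has size 1
    left
    obtain ⟨f, hfval⟩ : ∃ f : Fin (n + 2) → Fin (n + 2),
        ∀ j : Fin (n + 2), (f j : ℕ) = (π ⟨(j : ℕ) + 1, by omega⟩ : ℕ) := by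
      refine ⟨fun j => ⟨(π ⟨(j : ℕ) + 1, by omega⟩ : ℕ), ?_⟩, fun j => rfl⟩
      refine hne _ (fun h => ?_)
      have := congrArg Fin.val h
      simp only [] at this
      omega
    have hinj : Function.Injective f := by
      intro x y hxy
      have h1 : (f x : ℕ) = (f y : ℕ) := congrArg Fin.val hxy
      rw [hfval x, hfval y] at h1
      have h2 := congrArg Fin.val (π.injective (Fin.ext h1))
      simp only [] at h2
      exact Fin.ext (by omega)
    obtain ⟨ρ, hρ⟩ : ∃ ρ : Equiv.Perm (Fin (n + 2)), ∀ j, ρ j = f j :=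
      ⟨Equiv.ofBijective f (Finite.injective_iff_bijective.mp hinj), fun j => rfl⟩
    have hπeq : π = extPerm 1 ρ := by
      apply Equiv.ext
      intro x
      apply Fin.ext
      by_cases hx : (x : ℕ) < 1
      · rw [extPerm_lt 1 ρ x hx]
        have hxm : x = m := Fin.ext (by omega)
        rw [hxm, hmL]; omega
      · rw [extPerm_ge 1 ρ x (by omega), hρ, hfval]
        have harg : (⟨((⟨(x : ℕ) - 1, by omega⟩ : Fin (n + 2)) : ℕ) + 1, by omega⟩ :
            Fin (n + 3)) = x := Fin.ext (by simp only []; omega)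
        rw [harg]
    have hgπ : Good π := ⟨g1, g2, g3⟩
    exact ⟨ρ, (good_extPerm (b := 1) (by omega) ρ).mp (hπeq ▸ hgπ), hπeq⟩
  · by_cases hm1 : (m : ℕ) = 1
    · -- first block has size 2
      right; left
      obtain ⟨z0, hz0⟩ : ∃ z : Fin (n + 3), (z : ℕ) = 0 := ⟨⟨0, by omega⟩, rfl⟩
      have hz0m : z0 ≠ m := fun h => by have := congrArg Fin.val h; omega
      have hlt2 : ∀ j : Fin (n + 3), 2 ≤ (j : ℕ) → π j < π z0 := by
        intro j hj
        exact dec z0 j (Fin.le_def.2 (by omega)) (Fin.lt_def.2 (by omega))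
      have hub : (π z0 : ℕ) < n + 2 := hne z0 hz0m
      have hlb : n + 1 ≤ (π z0 : ℕ) := by
        obtain ⟨g, hgval⟩ : ∃ g : Fin (n + 1) → Fin ((π z0 : ℕ)),
            ∀ j : Fin (n + 1), (g j : ℕ) = (π ⟨(j : ℕ) + 2, by omega⟩ : ℕ) := by
          refine ⟨fun j => ⟨(π ⟨(j : ℕ) + 2, by omega⟩ : ℕ), ?_⟩, fun j => rfl⟩
          exact Fin.lt_def.1 (hlt2 ⟨(j : ℕ) + 2, by omega⟩ (by simp only []; omega))
        have ginj : Function.Injective g := by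
          intro x y hxy
          have h1 : (g x : ℕ) = (g y : ℕ) := congrArg Fin.val hxy
          rw [hgval x, hgval y] at h1
          have h2 := congrArg Fin.val (π.injective (Fin.ext h1))
          simp only [] at h2
          exact Fin.ext (by omega)
        have := Fintype.card_le_of_injective g ginj
        simpa using this
      have hval0 : (π z0 : ℕ) = n + 1 := by omega
      obtain ⟨f, hfval⟩ : ∃ f : Fin (n + 1) → Fin (n + 1),
          ∀ j : Fin (n + 1), (f j : ℕ) = (π ⟨(j : ℕ) + 2, by omega⟩ : ℕ) := by
        refine ⟨fun j => ⟨(π ⟨(j : ℕ) + 2, by omega⟩ : ℕ), ?_⟩, fun j => rfl⟩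
        have := Fin.lt_def.1 (hlt2 ⟨(j : ℕ) + 2, by omega⟩ (by simp only []; omega))
        omega
      have hinj : Function.Injective f := by
        intro x y hxy
        have h1 : (f x : ℕ) = (f y : ℕ) := congrArg Fin.val hxy
        rw [hfval x, hfval y] at h1
        have h2 := congrArg Fin.val (π.injective (Fin.ext h1))
        simp only [] at h2
        exact Fin.ext (by omega)
      obtain ⟨ρ, hρ⟩ : ∃ ρ : Equiv.Perm (Fin (n + 1)), ∀ j, ρ j = f j :=
        ⟨Equiv.ofBijective f (Finite.injective_iff_bijective.mp hinj), fun j => rfl⟩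
      have hπeq : π = extPerm 2 ρ := by
        apply Equiv.ext
        intro x
        apply Fin.ext
        by_cases hx : (x : ℕ) < 2
        · rw [extPerm_lt 2 ρ x hx]
          rcases (show (x : ℕ) = 0 ∨ (x : ℕ) = 1 by omega) with h | h
          · have hx0 : x = z0 := Fin.ext (by omega)
            rw [hx0]; omega
          · have hx1 : x = m := Fin.ext (by omega)
            rw [hx1]; omega
        · rw [extPerm_ge 2 ρ x (by omega), hρ, hfval]
          have harg : (⟨((⟨(x : ℕ) - 2, by omega⟩ : Fin (n + 1)) : ℕ) + 2, by omega⟩ :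
              Fin (n + 3)) = x := Fin.ext (by simp only []; omega)
          rw [harg]
      have hgπ : Good π := ⟨g1, g2, g3⟩
      exact ⟨ρ, (good_extPerm (b := 2) (by omega) ρ).mp (hπeq ▸ hgπ), hπeq⟩
    · by_cases hm2 : (m : ℕ) = n + 2
      · -- π is the identity
        right; right
        apply strictMono_eq_one
        intro i j hij
        exact incr i j hij (Fin.le_def.2 (by have := j.isLt; omega))
      · -- impossible : 2 ≤ m ≤ n+1 gives a 2341 pattern
        exfalso
        obtain ⟨z0, hz0⟩ : ∃ z : Fin (n + 3), (z : ℕ) = 0 := ⟨⟨0, by omega⟩, rfl⟩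
        obtain ⟨z1, hz1⟩ : ∃ z : Fin (n + 3), (z : ℕ) = 1 := ⟨⟨1, by omega⟩, rfl⟩
        obtain ⟨z2, hz2⟩ : ∃ z : Fin (n + 3), (z : ℕ) = 2 := ⟨⟨2, by omega⟩, rfl⟩
        obtain ⟨zL, hzL⟩ : ∃ z : Fin (n + 3), (z : ℕ) = n + 2 := ⟨⟨n + 2, by omega⟩, rfl⟩
        have hmub : (m : ℕ) ≤ n + 1 := by have := m.isLt; omega
        have e01 : π z0 < π z1 :=
          incr _ _ (Fin.lt_def.2 (by omega)) (Fin.le_def.2 (by omega))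
        have e12 : π z1 < π z2 :=
          incr _ _ (Fin.lt_def.2 (by omega)) (Fin.le_def.2 (by omega))
        have eL : π zL < π z0 :=
          dec _ _ (Fin.le_def.2 (by omega)) (Fin.lt_def.2 (by omega))
        exact g3 z0 z1 z2 zL (Fin.lt_def.2 (by omega)) (Fin.lt_def.2 (by omega))
          (Fin.lt_def.2 (by omega)) e01 e12 eL

lemma extPerm_injective (b : ℕ) {n : ℕ} {ρ ρ' : Equiv.Perm (Fin n)}
    (h : extPerm b ρ = extPerm b ρ') : ρ = ρ' := by
  apply Equiv.ext
  intro j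
  have h1 := congrArg
    (fun σ : Equiv.Perm (Fin (n + b)) => ((σ ⟨b + (j : ℕ), by omega⟩ : Fin (n + b)) : ℕ)) h
  rw [extPerm_pos b ρ j, extPerm_pos b ρ' j] at h1
  exact Fin.ext h1

lemma extPerm_apply_zero (b : ℕ) {n : ℕ} (ρ : Equiv.Perm (Fin n)) (hb : 0 < b)
    (hnb : 0 < n + b) : ((extPerm b ρ) ⟨0, hnb⟩ : ℕ) = n := by
  rw [extPerm_lt b ρ _ (by simpa using hb)]
  rfl

lemma good_small {n : ℕ} (hn : n ≤ 2) (π : Equiv.Perm (Fin n)) : Good π := by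
  refine ⟨?_, ?_, ?_⟩
  · intro i j k hij hjk _ _
    have := i.isLt; have := j.isLt; have := k.isLt
    have := Fin.lt_def.1 hij; have := Fin.lt_def.1 hjk
    omega
  · intro i j k hij hjk _ _
    have := i.isLt; have := j.isLt; have := k.isLt
    have := Fin.lt_def.1 hij; have := Fin.lt_def.1 hjk
    omega
  · intro i j k l hij hjk hkl _ _ _
    have := i.isLt; have := j.isLt; have := k.isLt; have := l.isLt
    have := Fin.lt_def.1 hij; have := Fin.lt_def.1 hjk; have := Fin.lt_def.1 hkl
    omega

lemma card_good_one : Nat.card {π : Equiv.Perm (Fin 1) // Good π} = 1 := by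
  rw [Nat.card_congr (Equiv.subtypeUnivEquiv (fun π => good_small (by omega) π))]
  rw [Nat.card_eq_fintype_card, Fintype.card_perm]
  simp

lemma card_good_two : Nat.card {π : Equiv.Perm (Fin 2) // Good π} = 2 := by
  rw [Nat.card_congr (Equiv.subtypeUnivEquiv (fun π => good_small (by omega) π))]
  rw [Nat.card_eq_fintype_card, Fintype.card_perm]
  simp

lemma card_rec (n : ℕ) :
    Nat.card {π : Equiv.Perm (Fin (n + 3)) // Good π} =
      Nat.card {π : Equiv.Perm (Fin (n + 2)) // Good π} +
      Nat.card {π : Equiv.Perm (Fin (n + 1)) // Good π} + 1 := by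
  classical
  set A2 := {π : Equiv.Perm (Fin (n + 2)) // Good π}
  set A1 := {π : Equiv.Perm (Fin (n + 1)) // Good π}
  let E : A2 ⊕ A1 ⊕ Unit → {π : Equiv.Perm (Fin (n + 3)) // Good π} := fun x =>
    match x with
    | Sum.inl ⟨ρ, h⟩ => ⟨extPerm 1 ρ, (good_extPerm (b := 1) (by omega) ρ).mpr h⟩
    | Sum.inr (Sum.inl ⟨ρ, h⟩) => ⟨extPerm 2 ρ, (good_extPerm (b := 2) (by omega) ρ).mpr h⟩
    | Sum.inr (Sum.inr _) => ⟨1, good_one _⟩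
  have vext : ∀ σ τ : Equiv.Perm (Fin (n + 3)), σ = τ →
      ((σ ⟨0, by omega⟩ : Fin (n + 3)) : ℕ) = ((τ ⟨0, by omega⟩ : Fin (n + 3)) : ℕ) :=
    fun σ τ hh => by rw [hh]
  have e1 : ∀ ρ : Equiv.Perm (Fin (n + 2)), ((extPerm 1 ρ) ⟨0, by omega⟩ : ℕ) = n + 2 :=
    fun ρ => extPerm_apply_zero 1 ρ (by omega) (by omega)
  have e2 : ∀ ρ : Equiv.Perm (Fin (n + 1)), ((extPerm 2 ρ) ⟨0, by omega⟩ : ℕ) = n + 1 :=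
    fun ρ => extPerm_apply_zero 2 ρ (by omega) (by omega)
  have e3 : (((1 : Equiv.Perm (Fin (n + 3))) ⟨0, by omega⟩ : Fin (n + 3)) : ℕ) = 0 := rfl
  have hbij : Function.Bijective E := by
    constructor
    · rintro (⟨ρ, h⟩ | ⟨ρ, h⟩ | ⟨⟩) (⟨ρ', h'⟩ | ⟨ρ', h'⟩ | ⟨⟩) hxy
      · have hp : extPerm 1 ρ = extPerm 1 ρ' := Subtype.ext_iff.mp hxy
        exact congrArg Sum.inl (Subtype.ext (extPerm_injective 1 hp))
      · have h1 : ((extPerm 1 ρ) ⟨0, by omega⟩ : ℕ) = ((extPerm 2 ρ') ⟨0, by omega⟩ : ℕ) :=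
          vext _ _ (Subtype.ext_iff.mp hxy)
        rw [e1, e2] at h1; omega
      · have h1 : ((extPerm 1 ρ) ⟨0, by omega⟩ : ℕ) =
            (((1 : Equiv.Perm (Fin (n + 3))) ⟨0, by omega⟩ : Fin (n + 3)) : ℕ) :=
          vext _ _ (Subtype.ext_iff.mp hxy)
        rw [e1, e3] at h1; omega
      · have h1 : ((extPerm 2 ρ) ⟨0, by omega⟩ : ℕ) = ((extPerm 1 ρ') ⟨0, by omega⟩ : ℕ) :=
          vext _ _ (Subtype.ext_iff.mp hxy)
        rw [e1, e2] at h1; omega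
      · have hp : extPerm 2 ρ = extPerm 2 ρ' := Subtype.ext_iff.mp hxy
        exact congrArg (Sum.inr ∘ Sum.inl) (Subtype.ext (extPerm_injective 2 hp))
      · have h1 : ((extPerm 2 ρ) ⟨0, by omega⟩ : ℕ) =
            (((1 : Equiv.Perm (Fin (n + 3))) ⟨0, by omega⟩ : Fin (n + 3)) : ℕ) :=
          vext _ _ (Subtype.ext_iff.mp hxy)
        rw [e2, e3] at h1; omega
      · have h1 : (((1 : Equiv.Perm (Fin (n + 3))) ⟨0, by omega⟩ : Fin (n + 3)) : ℕ) =
            ((extPerm 1 ρ') ⟨0, by omega⟩ : ℕ) :=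
          vext _ _ (Subtype.ext_iff.mp hxy)
        rw [e1, e3] at h1; omega
      · have h1 : (((1 : Equiv.Perm (Fin (n + 3))) ⟨0, by omega⟩ : Fin (n + 3)) : ℕ) =
            ((extPerm 2 ρ') ⟨0, by omega⟩ : ℕ) :=
          vext _ _ (Subtype.ext_iff.mp hxy)
        rw [e2, e3] at h1; omega
      · rfl
    · rintro ⟨π, h⟩
      rcases good_structure n π h with ⟨ρ, hρg, hρe⟩ | ⟨ρ, hρg, hρe⟩ | h1
      · exact ⟨Sum.inl ⟨ρ, hρg⟩, Subtype.ext hρe.symm⟩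
      · exact ⟨Sum.inr (Sum.inl ⟨ρ, hρg⟩), Subtype.ext hρe.symm⟩
      · exact ⟨Sum.inr (Sum.inr Unit.unit), Subtype.ext h1.symm⟩
  have hcard := Nat.card_eq_of_bijective E hbij
  rw [Nat.card_sum, Nat.card_sum] at hcard
  simp only [Nat.card_unique] at hcard
  omega

lemma main_count : ∀ n : ℕ, 1 ≤ n →
    Nat.card {π : Equiv.Perm (Fin n) // Good π} + 1 = Nat.fib (n + 2) := by
  intro n
  induction n using Nat.strong_induction_on with
  | _ n ih =>
    intro hn
    match n, hn, ih with
    | 1, _, _ => rw [card_good_one]; decide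
    | 2, _, _ => rw [card_good_two]; decide
    | (k + 3), _, ih =>
      have h1 : Nat.card {π : Equiv.Perm (Fin (k + 2)) // Good π} + 1 = Nat.fib (k + 4) :=
        ih (k + 2) (by omega) (by omega)
      have h2 : Nat.card {π : Equiv.Perm (Fin (k + 1)) // Good π} + 1 = Nat.fib (k + 3) :=
        ih (k + 1) (by omega) (by omega)
      have h3 : Nat.fib (k + 5) = Nat.fib (k + 3) + Nat.fib (k + 4) := Nat.fib_add_two
      show Nat.card {π : Equiv.Perm (Fin (k + 3)) // Good π} + 1 = Nat.fib (k + 5)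
      rw [card_rec k]
      omega

/-- For `n ≥ 1`, `|S_n(132, 213, 2341)| = F_{n+2} - 1`. -/
theorem statement11 (n : ℕ) (hn : 1 ≤ n) :
    (Nat.card {π : Equiv.Perm (Fin n) //
        PAvoids π p132 ∧ PAvoids π p213 ∧ PAvoids π p2341} : ℤ) =
      Nat.fib (n + 2) - 1 := by
  have hc : Nat.card {π : Equiv.Perm (Fin n) //
        PAvoids π p132 ∧ PAvoids π p213 ∧ PAvoids π p2341} =
      Nat.card {π : Equiv.Perm (Fin n) // Good π} :=
    Nat.card_congr (Equiv.subtypeEquivRight fun π => avoids_iff_good π)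
  have h := main_count n hn
  rw [hc]
  omega
end

section
/- Let R be any set of permutations (of arbitrary lengths) and let k ≥ 0. Then for all n ≥ k, |S_n(E^k(R))| = (n!/(n−k)!)·|S_{n−k}(R)|, and for all 0 ≤ n < k, |S_n(E^k(R))| = n!. -/
/-- `β` (a permutation of `{1,…,m+1}`) is an extension of `α` (a permutation of `{1,…,m}`):
deleting the largest entry from the one-line notation of `β` yields the one-line
notation of `α`.  (Zero-indexed: the positions other than `β⁻¹ (Fin.last m)`, taken in
order via `Fin.succAbove`, carry the values of `α`.) -/
def IsExtension {m : ℕ} (β : Equiv.Perm (Fin (m + 1))) (α : Equiv.Perm (Fin m)) : Prop :=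
  ∀ i : Fin m, (α i : ℕ) = (β ((β⁻¹ (Fin.last m)).succAbove i) : ℕ)

/-- The extension `E(R)` of a set `R` of permutations (of arbitrary lengths):
all permutations that are extensions of some element of `R`. -/
def PermExt (R : Set ((n : ℕ) × Equiv.Perm (Fin n))) : Set ((n : ℕ) × Equiv.Perm (Fin n)) :=
  { p | ∃ (m : ℕ) (β : Equiv.Perm (Fin (m + 1))) (α : Equiv.Perm (Fin m)),
      p = ⟨m + 1, β⟩ ∧ (⟨m, α⟩ : (n : ℕ) × Equiv.Perm (Fin n)) ∈ R ∧ IsExtension β α }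

/-- `|S_n(R)|`: the number of permutations of `{1,…,n}` avoiding every pattern in the
set `R` of permutations of arbitrary lengths. -/
noncomputable def SnCard (n : ℕ) (R : Set ((n : ℕ) × Equiv.Perm (Fin n))) : ℕ :=
  Nat.card {π : Equiv.Perm (Fin n) // ∀ σ ∈ R, PAvoids π σ.2}

/-!
Deleting the entry `n + 1` from the one-line notation of `π ∈ S_{n+1}` and remembering its
position is a bijection `S_{n+1} ≃ [n+1] × S_n`. Under it, `π` contains an extension of `σ` iff
the shortened permutation contains `σ`: in an occurrence of an extension, every entry other than
the image of its maximum is smaller than some entry, hence is not `n + 1`; conversely, adding the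
position of `n + 1` to an occurrence of `σ` yields an occurrence of an extension of `σ`. So
`|S_{n+1}(E(R))| = (n+1) |S_n(R)|`, and iterating gives the descending factorial. For `n < k`
every element of `E^k(R)` is longer than `n`, so nothing of length `n` contains it.
-/

/-- Deleting the largest entry from the one-line notation of a permutation. -/
def delMax {n : ℕ} (β : Equiv.Perm (Fin (n + 1))) : Equiv.Perm (Fin n) :=
  Equiv.removeNone ((finSuccEquiv' (β⁻¹ (Fin.last n))).symm.trans (β.trans finSuccEquivLast))

/-- Inserting a new largest entry at position `j` into the one-line notation of `ρ`. -/
def insertMax {n : ℕ} (j : Fin (n + 1)) (ρ : Equiv.Perm (Fin n)) : Equiv.Perm (Fin (n + 1)) :=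
  (finSuccEquiv' j).trans (ρ.optionCongr.trans finSuccEquivLast.symm)

section DelMax

variable {n : ℕ}

lemma apply_succAbove_inv_last_ne_last (β : Equiv.Perm (Fin (n + 1))) (i : Fin n) :
    β ((β⁻¹ (Fin.last n)).succAbove i) ≠ Fin.last n := fun h =>
  Fin.succAbove_ne _ i ((Equiv.eq_symm_apply β).mpr h)

lemma castSucc_delMax_apply (β : Equiv.Perm (Fin (n + 1))) (i : Fin n) :
    (delMax β i).castSucc = β ((β⁻¹ (Fin.last n)).succAbove i) := by
  have hne := apply_succAbove_inv_last_ne_last β i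
  have hsome : ((finSuccEquiv' (β⁻¹ (Fin.last n))).symm.trans (β.trans finSuccEquivLast))
      (some i) = some ((β ((β⁻¹ (Fin.last n)).succAbove i)).castPred hne) := by
    rw [Equiv.trans_apply, finSuccEquiv'_symm_some, Equiv.trans_apply,
      ← finSuccEquivLast_castSucc, Fin.castSucc_castPred]
  have := Equiv.removeNone_some _ ⟨_, hsome⟩
  rw [hsome, Option.some_inj] at this
  rw [delMax, this, Fin.castSucc_castPred]

lemma isExtension_iff_eq_delMax (β : Equiv.Perm (Fin (n + 1))) (α : Equiv.Perm (Fin n)) :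
    IsExtension β α ↔ α = delMax β := by
  simp only [IsExtension, Equiv.ext_iff, Fin.ext_iff, ← castSucc_delMax_apply, Fin.val_castSucc]

@[simp]
lemma insertMax_apply_self (j : Fin (n + 1)) (ρ : Equiv.Perm (Fin n)) :
    insertMax j ρ j = Fin.last n := by
  simp [insertMax, finSuccEquiv'_at]

@[simp]
lemma insertMax_apply_succAbove (j : Fin (n + 1)) (ρ : Equiv.Perm (Fin n)) (i : Fin n) :
    insertMax j ρ (j.succAbove i) = (ρ i).castSucc := by
  simp [insertMax, finSuccEquiv'_succAbove]

lemma insertMax_inv_last (j : Fin (n + 1)) (ρ : Equiv.Perm (Fin n)) :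
    (insertMax j ρ)⁻¹ (Fin.last n) = j := by
  rw [Equiv.Perm.inv_eq_iff_eq, insertMax_apply_self]

@[simp]
lemma delMax_insertMax (j : Fin (n + 1)) (ρ : Equiv.Perm (Fin n)) :
    delMax (insertMax j ρ) = ρ := by
  ext i
  rw [← Fin.val_castSucc, castSucc_delMax_apply, insertMax_inv_last, insertMax_apply_succAbove,
    Fin.val_castSucc]

lemma insertMax_delMax (β : Equiv.Perm (Fin (n + 1))) :
    insertMax (β⁻¹ (Fin.last n)) (delMax β) = β := by
  ext1 x
  rcases eq_or_ne x (β⁻¹ (Fin.last n)) with rfl | hx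
  · simp
  · obtain ⟨i, rfl⟩ := Fin.exists_succAbove_eq hx
    rw [insertMax_apply_succAbove, castSucc_delMax_apply]

end DelMax

lemma StrictMono.exists_extend_fin {α : Type*} [LinearOrder α] {m : ℕ} {f : Fin m → α}
    (hf : StrictMono f) {x : α} (hx : x ∉ Set.range f) :
    ∃ (g : Fin (m + 1) → α) (p : Fin (m + 1)),
      StrictMono g ∧ g p = x ∧ ∀ i, g (p.succAbove i) = f i := by
  classical
  set s := Finset.univ.image f
  have hs : s.card = m := by
    rw [Finset.card_image_of_injective _ hf.injective, Finset.card_univ, Fintype.card_fin]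
  have hxs : x ∉ s := by simpa [s] using hx
  have hcard : (insert x s).card = m + 1 := by rw [Finset.card_insert_of_notMem hxs, hs]
  set g := (insert x s).orderEmbOfFin hcard
  obtain ⟨p, hp⟩ : x ∈ Set.range g := by simp [g]
  refine ⟨g, p, g.strictMono, hp, congrFun (?_ : (fun i => g (p.succAbove i)) = f)⟩
  have hgs : ∀ i, g (p.succAbove i) ∈ s := fun i =>
    (Finset.mem_insert.1 (Finset.orderEmbOfFin_mem _ hcard _)).resolve_left fun h =>
      Fin.succAbove_ne p i (g.injective (h.trans hp.symm))
  rw [Finset.orderEmbOfFin_unique hs hgs (g.strictMono.comp (Fin.strictMono_succAbove p))]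
  exact (Finset.orderEmbOfFin_unique hs (fun i => Finset.mem_image_of_mem f (Finset.mem_univ i))
    hf).symm

section Patterns

variable {n m : ℕ}

lemma PContains.delMax_delMax {π : Equiv.Perm (Fin (n + 1))} {β : Equiv.Perm (Fin (m + 1))}
    (h : PContains π β) : PContains (delMax π) (delMax β) := by
  obtain ⟨f, hf, hord⟩ := h
  set j := π⁻¹ (Fin.last n)
  set p := β⁻¹ (Fin.last m)
  -- entries of the occurrence other than the image of `β`'s maximum lie below it, so not at `j`
  have hne : ∀ i, f (p.succAbove i) ≠ j := by
    intro i hi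
    have hlt : π (f (p.succAbove i)) < π (f p) := (hord _ _).2 <| by
      rw [show β p = Fin.last m from β.apply_symm_apply _]
      exact Fin.lt_last_iff_ne_last.2 (apply_succAbove_inv_last_ne_last β i)
    rw [hi, show π j = Fin.last n from π.apply_symm_apply _] at hlt
    exact (Fin.le_last _).not_gt hlt
  choose g hg using fun i => Fin.exists_succAbove_eq (hne i)
  have hval : ∀ i, (delMax π (g i)).castSucc = π (f (p.succAbove i)) := fun i => by
    rw [castSucc_delMax_apply, hg]
  refine ⟨g, fun s t hst => ?_, fun s t => ?_⟩
  · rw [← (Fin.strictMono_succAbove j).lt_iff_lt, hg, hg]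
    exact hf (Fin.strictMono_succAbove p hst)
  · rw [← Fin.castSucc_lt_castSucc_iff, hval, hval, hord, ← castSucc_delMax_apply,
      ← castSucc_delMax_apply, Fin.castSucc_lt_castSucc_iff]

lemma PContains.exists_delMax_eq {π : Equiv.Perm (Fin (n + 1))} {σ : Equiv.Perm (Fin m)}
    (h : PContains (delMax π) σ) :
    ∃ β : Equiv.Perm (Fin (m + 1)), delMax β = σ ∧ PContains π β := by
  obtain ⟨f, hf, hord⟩ := h
  set j := π⁻¹ (Fin.last n)
  have hj : j ∉ Set.range (j.succAbove ∘ f) := fun ⟨i, hi⟩ => Fin.succAbove_ne j (f i) hi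
  obtain ⟨g, p, hg, hgp, hgf⟩ :=
    ((Fin.strictMono_succAbove j).comp hf).exists_extend_fin hj
  have hπp : π (g p) = Fin.last n := by rw [hgp]; exact π.apply_symm_apply _
  have hπs : ∀ i, π (g (p.succAbove i)) = (delMax π (f i)).castSucc := fun i => by
    rw [hgf, castSucc_delMax_apply]; rfl
  refine ⟨insertMax p σ, delMax_insertMax p σ, g, hg, fun s t => ?_⟩
  induction s using Fin.succAboveCases p <;> induction t using Fin.succAboveCases p <;>
    simp [hπp, hπs, hord, Fin.castSucc_lt_last, (Fin.le_last _).not_gt]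

lemma pContains_delMax_iff {π : Equiv.Perm (Fin (n + 1))} {σ : Equiv.Perm (Fin m)} :
    PContains (delMax π) σ ↔ ∃ β : Equiv.Perm (Fin (m + 1)), delMax β = σ ∧ PContains π β :=
  ⟨PContains.exists_delMax_eq, fun ⟨_, hβ, h⟩ => hβ ▸ h.delMax_delMax⟩

lemma forall_pAvoids_permExt_iff (R : Set ((n : ℕ) × Equiv.Perm (Fin n)))
    (π : Equiv.Perm (Fin (n + 1))) :
    (∀ σ ∈ PermExt R, PAvoids π σ.2) ↔ ∀ σ ∈ R, PAvoids (delMax π) σ.2 := by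
  constructor
  · rintro h ⟨m, σ⟩ hσ hc
    obtain ⟨β, hβσ, hβ⟩ := pContains_delMax_iff.1 hc
    exact h ⟨m + 1, β⟩ ⟨m, β, σ, rfl, hσ, (isExtension_iff_eq_delMax _ _).2 hβσ.symm⟩ hβ
  · rintro h _ ⟨m, β, α, rfl, hα, hext⟩ hc
    rw [isExtension_iff_eq_delMax] at hext
    exact h _ hα (hext ▸ hc.delMax_delMax)

end Patterns

def avoidersPermExtEquiv (R : Set ((n : ℕ) × Equiv.Perm (Fin n))) (n : ℕ) :
    {π : Equiv.Perm (Fin (n + 1)) // ∀ σ ∈ PermExt R, PAvoids π σ.2} ≃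
      Fin (n + 1) × {ρ : Equiv.Perm (Fin n) // ∀ σ ∈ R, PAvoids ρ σ.2} where
  toFun π := (π.1⁻¹ (Fin.last n), ⟨delMax π.1, (forall_pAvoids_permExt_iff R π.1).1 π.2⟩)
  invFun x := ⟨insertMax x.1 x.2.1,
    (forall_pAvoids_permExt_iff R _).2 (by rw [delMax_insertMax]; exact x.2.2)⟩
  left_inv π := Subtype.ext (insertMax_delMax π.1)
  right_inv x := Prod.ext (insertMax_inv_last x.1 x.2.1) (Subtype.ext (delMax_insertMax x.1 x.2.1))

lemma snCard_permExt_succ (R : Set ((n : ℕ) × Equiv.Perm (Fin n))) (n : ℕ) :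
    SnCard (n + 1) (PermExt R) = (n + 1) * SnCard n R := by
  rw [SnCard, Nat.card_congr (avoidersPermExtEquiv R n), Nat.card_prod, Nat.card_fin, SnCard]

lemma snCard_iterate_permExt_add (R : Set ((n : ℕ) × Equiv.Perm (Fin n))) (n k : ℕ) :
    SnCard (n + k) (PermExt^[k] R) = (n + k).descFactorial k * SnCard n R := by
  induction k with
  | zero => simp
  | succ k ih =>
    rw [Function.iterate_succ_apply', ← add_assoc, snCard_permExt_succ, ih,
      Nat.succ_descFactorial_succ, mul_assoc]

lemma le_fst_of_mem_iterate_permExt {R : Set ((n : ℕ) × Equiv.Perm (Fin n))} {k : ℕ}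
    {σ : (n : ℕ) × Equiv.Perm (Fin n)} (hσ : σ ∈ PermExt^[k] R) : k ≤ σ.1 := by
  induction k generalizing σ with
  | zero => exact Nat.zero_le _
  | succ k ih =>
    rw [Function.iterate_succ_apply'] at hσ
    obtain ⟨m, β, α, rfl, hα, -⟩ := hσ
    exact Nat.succ_le_succ (ih hα)

lemma PContains.le {n k : ℕ} {π : Equiv.Perm (Fin n)} {σ : Equiv.Perm (Fin k)}
    (h : PContains π σ) : k ≤ n :=
  let ⟨f, hf, _⟩ := h
  Fin.le_of_injective f hf.injective

lemma snCard_eq_factorial {R : Set ((n : ℕ) × Equiv.Perm (Fin n))} {n : ℕ}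
    (hR : ∀ σ ∈ R, n < σ.1) : SnCard n R = n.factorial := by
  have hall (π : Equiv.Perm (Fin n)) : ∀ σ ∈ R, PAvoids π σ.2 := fun σ hσ hc =>
    (hR σ hσ).not_ge hc.le
  rw [SnCard, Nat.card_congr (Equiv.subtypeUnivEquiv hall), Nat.card_eq_fintype_card, Fintype.card_perm, Fintype.card_fin]

/-- For any set `R` of permutations and any `k ≥ 0`:
`|S_n(E^k(R))| = (n!/(n-k)!) ⬝ |S_{n-k}(R)|` for `n ≥ k` (here `n!/(n-k)!` is the
descending factorial), and `|S_n(E^k(R))| = n!` for `0 ≤ n < k`. -/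
theorem statement14 (R : Set ((n : ℕ) × Equiv.Perm (Fin n))) (k : ℕ) :
    (∀ n, k ≤ n → SnCard n (PermExt^[k] R) = Nat.descFactorial n k * SnCard (n - k) R) ∧
    (∀ n, n < k → SnCard n (PermExt^[k] R) = Nat.factorial n) := by
  refine ⟨fun n hn => ?_, fun n hn => ?_⟩
  · obtain ⟨d, rfl⟩ := Nat.exists_eq_add_of_le' hn
    rw [snCard_iterate_permExt_add, Nat.add_sub_cancel]
  · exact snCard_eq_factorial fun σ hσ => hn.trans_le (le_fst_of_mem_iterate_permExt hσ)
end
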